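/- arXiv:2603.14096 — 6 statements merged into one kernel-verified Lean document; each statement's English description precedes it below -/
import Mathlib

section
/- Fix thresholds t₋ < t₊. A subset E ⊆ Fin n satisfies t₋ < s(x') < t₊ for every completion x' of E if and only if sMin(E) > t₋ and sMax(E) < t₊. (That is, E is an abductive explanation of rejection, disregarding minimality, exactly when both worst-case score bounds lie strictly inside the rejection interval.) -/
open Finset

theorem rejection_AXp_characterization_strict
    (n : ℕ) (w : Fin n → ℝ) (b : ℝ) (l u : Fin n → ℝ)
    (hlu : ∀ j, l j ≤ u j)
    (x : Fin n → ℝ) (hx : ∀ j, l j ≤ x j ∧ x j ≤ u j)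
    (tMinus tPlus : ℝ) (ht : tMinus < tPlus)
    (E : Finset (Fin n)) :
    (∀ x' : Fin n → ℝ, (∀ j, l j ≤ x' j ∧ x' j ≤ u j) → (∀ j ∈ E, x' j = x j) →
        tMinus < (∑ j, w j * x' j) + b ∧ (∑ j, w j * x' j) + b < tPlus) ↔
    (tMinus < (∑ j ∈ E, w j * x j) + b + (∑ j ∈ Eᶜ, min (w j * l j) (w j * u j)) ∧
     (∑ j ∈ E, w j * x j) + b + (∑ j ∈ Eᶜ, max (w j * l j) (w j * u j)) < tPlus) := by
  have key : ∀ x' : Fin n → ℝ, (∀ j ∈ E, x' j = x j) →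
      (∑ j, w j * x' j) = (∑ j ∈ E, w j * x j) + ∑ j ∈ Eᶜ, w j * x' j := by
    intro x' hE
    rw [← Finset.sum_add_sum_compl E (fun j => w j * x' j)]
    congr 1
    exact Finset.sum_congr rfl (fun j hj => by rw [hE j hj])
  constructor
  · intro h
    constructor
    · set y : Fin n → ℝ := fun j => if j ∈ E then x j else (if 0 ≤ w j then l j else u j) with hy
      have hyb : ∀ j, l j ≤ y j ∧ y j ≤ u j := by
        intro j
        simp only [hy]
        split_ifs with h1 h2
        · exact hx j
        · exact ⟨le_refl _, hlu j⟩
        · exact ⟨hlu j, le_refl _⟩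
      have hyE : ∀ j ∈ E, y j = x j := fun j hj => by simp [hy, hj]
      have := (h y hyb hyE).1
      have heq : (∑ j ∈ Eᶜ, w j * y j) = ∑ j ∈ Eᶜ, min (w j * l j) (w j * u j) := by
        refine Finset.sum_congr rfl (fun j hj => ?_)
        have hjE : j ∉ E := Finset.mem_compl.mp hj
        simp only [hy, if_neg hjE]
        rcases le_or_gt 0 (w j) with hw | hw
        · rw [if_pos hw, min_eq_left (by nlinarith [hlu j])]
        · rw [if_neg (not_le.mpr hw), min_eq_right (by nlinarith [hlu j])]
      rw [key y hyE, heq] at this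
      linarith
    · set y : Fin n → ℝ := fun j => if j ∈ E then x j else (if 0 ≤ w j then u j else l j) with hy
      have hyb : ∀ j, l j ≤ y j ∧ y j ≤ u j := by
        intro j
        simp only [hy]
        split_ifs with h1 h2
        · exact hx j
        · exact ⟨hlu j, le_refl _⟩
        · exact ⟨le_refl _, hlu j⟩
      have hyE : ∀ j ∈ E, y j = x j := fun j hj => by simp [hy, hj]
      have := (h y hyb hyE).2
      have heq : (∑ j ∈ Eᶜ, w j * y j) = ∑ j ∈ Eᶜ, max (w j * l j) (w j * u j) := by
        refine Finset.sum_congr rfl (fun j hj => ?_)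
        have hjE : j ∉ E := Finset.mem_compl.mp hj
        simp only [hy, if_neg hjE]
        rcases le_or_gt 0 (w j) with hw | hw
        · rw [if_pos hw, max_eq_right (by nlinarith [hlu j])]
        · rw [if_neg (not_le.mpr hw), max_eq_left (by nlinarith [hlu j])]
      rw [key y hyE, heq] at this
      linarith
  · rintro ⟨h1, h2⟩ x' hb hE
    have hlow : (∑ j ∈ Eᶜ, min (w j * l j) (w j * u j)) ≤ ∑ j ∈ Eᶜ, w j * x' j := by
      refine Finset.sum_le_sum (fun j _ => ?_)
      rcases le_or_gt 0 (w j) with hw | hw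
      · exact le_trans (min_le_left _ _) (by nlinarith [(hb j).1])
      · exact le_trans (min_le_right _ _) (by nlinarith [(hb j).2])
    have hhigh : (∑ j ∈ Eᶜ, w j * x' j) ≤ ∑ j ∈ Eᶜ, max (w j * l j) (w j * u j) := by
      refine Finset.sum_le_sum (fun j _ => ?_)
      rcases le_or_gt 0 (w j) with hw | hw
      · exact le_trans (by nlinarith [(hb j).2]) (le_max_right _ _)
      · exact le_trans (by nlinarith [(hb j).1]) (le_max_left _ _)
    rw [key x' hE]
    constructor <;> linarith
end

section
/- (Theorem 1.) Fix thresholds t₋ < t₊ and assume t₋ ≤ s(x) ≤ t₊. Suppose E* ⊆ Fin n satisfies sMax(E*) ≤ t₊ and sMin(E*) ≥ t₋, and has minimum cardinality among all subsets E with sMax(E) ≤ t₊ and sMin(E) ≥ t₋ (i.e., E* is an optimal solution of the 0–1 ILP for rejection). Then: (i) every completion x' of E* satisfies t₋ ≤ s(x') ≤ t₊; and (ii) every subset E such that all completions x' of E satisfy t₋ ≤ s(x') ≤ t₊ has |E| ≥ |E*|. That is, E* is a minimum-size abductive explanation of rejection. -/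
open Finset

lemma mul_bound_aux (w l u y : ℝ) (h1 : l ≤ y) (h2 : y ≤ u) :
    min (w * l) (w * u) ≤ w * y ∧ w * y ≤ max (w * l) (w * u) := by
  rcases le_total 0 w with hw | hw
  · exact ⟨le_trans (min_le_left _ _) (mul_le_mul_of_nonneg_left h1 hw),
      le_trans (mul_le_mul_of_nonneg_left h2 hw) (le_max_right _ _)⟩
  · exact ⟨le_trans (min_le_right _ _) (mul_le_mul_of_nonpos_left h2 hw),
      le_trans (mul_le_mul_of_nonpos_left h1 hw) (le_max_left _ _)⟩

theorem ilp_optimum_is_min_size_AXp_of_rejection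
    (n : ℕ) (w : Fin n → ℝ) (b : ℝ) (l u : Fin n → ℝ)
    (hlu : ∀ j, l j ≤ u j)
    (x : Fin n → ℝ) (hx : ∀ j, l j ≤ x j ∧ x j ≤ u j)
    (tMinus tPlus : ℝ) (ht : tMinus < tPlus)
    (hs₁ : tMinus ≤ (∑ j, w j * x j) + b) (hs₂ : (∑ j, w j * x j) + b ≤ tPlus)
    (Estar : Finset (Fin n))
    (hmax : (∑ j ∈ Estar, w j * x j) + b + (∑ j ∈ Estarᶜ, max (w j * l j) (w j * u j)) ≤ tPlus)
    (hmin : tMinus ≤ (∑ j ∈ Estar, w j * x j) + b + (∑ j ∈ Estarᶜ, min (w j * l j) (w j * u j)))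
    (hopt : ∀ E : Finset (Fin n),
      (∑ j ∈ E, w j * x j) + b + (∑ j ∈ Eᶜ, max (w j * l j) (w j * u j)) ≤ tPlus →
      tMinus ≤ (∑ j ∈ E, w j * x j) + b + (∑ j ∈ Eᶜ, min (w j * l j) (w j * u j)) →
      Estar.card ≤ E.card) :
    (∀ x' : Fin n → ℝ, (∀ j, l j ≤ x' j ∧ x' j ≤ u j) → (∀ j ∈ Estar, x' j = x j) →
      tMinus ≤ (∑ j, w j * x' j) + b ∧ (∑ j, w j * x' j) + b ≤ tPlus) ∧
    (∀ E : Finset (Fin n),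
      (∀ x' : Fin n → ℝ, (∀ j, l j ≤ x' j ∧ x' j ≤ u j) → (∀ j ∈ E, x' j = x j) →
        tMinus ≤ (∑ j, w j * x' j) + b ∧ (∑ j, w j * x' j) + b ≤ tPlus) →
      Estar.card ≤ E.card) := by
  constructor
  · intro x' hx' hxe
    have hsplit : (∑ j, w j * x' j) =
        (∑ j ∈ Estar, w j * x j) + ∑ j ∈ Estarᶜ, w j * x' j := by
      rw [← Finset.sum_add_sum_compl Estar (fun j => w j * x' j)]
      congr 1
      exact Finset.sum_congr rfl fun j hj => by rw [hxe j hj]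
    have hlo : (∑ j ∈ Estarᶜ, min (w j * l j) (w j * u j)) ≤ ∑ j ∈ Estarᶜ, w j * x' j :=
      Finset.sum_le_sum fun j _ => (mul_bound_aux (w j) (l j) (u j) (x' j) (hx' j).1 (hx' j).2).1
    have hhi : (∑ j ∈ Estarᶜ, w j * x' j) ≤ ∑ j ∈ Estarᶜ, max (w j * l j) (w j * u j) :=
      Finset.sum_le_sum fun j _ => (mul_bound_aux (w j) (l j) (u j) (x' j) (hx' j).1 (hx' j).2).2
    constructor <;> [linarith; linarith]
  · intro E hE
    set xmax : Fin n → ℝ := fun j => if j ∈ E then x j else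
      (if w j * l j ≤ w j * u j then u j else l j) with hxmax
    set xmin : Fin n → ℝ := fun j => if j ∈ E then x j else
      (if w j * l j ≤ w j * u j then l j else u j) with hxmin
    have hxmaxb : ∀ j, l j ≤ xmax j ∧ xmax j ≤ u j := by
      intro j; simp only [hxmax]
      split_ifs <;> first | exact hx j | exact ⟨hlu j, le_refl _⟩ | exact ⟨le_refl _, hlu j⟩
    have hxminb : ∀ j, l j ≤ xmin j ∧ xmin j ≤ u j := by
      intro j; simp only [hxmin]
      split_ifs <;> first | exact hx j | exact ⟨hlu j, le_refl _⟩ | exact ⟨le_refl _, hlu j⟩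
    have hmaxeq : (∑ j, w j * xmax j) =
        (∑ j ∈ E, w j * x j) + ∑ j ∈ Eᶜ, max (w j * l j) (w j * u j) := by
      rw [← Finset.sum_add_sum_compl E (fun j => w j * xmax j)]
      congr 1
      · exact Finset.sum_congr rfl fun j hj => by simp [hxmax, hj]
      · refine Finset.sum_congr rfl fun j hj => ?_
        rw [Finset.mem_compl] at hj
        simp only [hxmax, if_neg hj, max_def]
        split_ifs <;> ring
    have hmineq : (∑ j, w j * xmin j) =
        (∑ j ∈ E, w j * x j) + ∑ j ∈ Eᶜ, min (w j * l j) (w j * u j) := by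
      rw [← Finset.sum_add_sum_compl E (fun j => w j * xmin j)]
      congr 1
      · exact Finset.sum_congr rfl fun j hj => by simp [hxmin, hj]
      · refine Finset.sum_congr rfl fun j hj => ?_
        rw [Finset.mem_compl] at hj
        simp only [hxmin, if_neg hj, min_def]
        split_ifs <;> ring
    have h1 := (hE xmax hxmaxb (fun j hj => by simp [hxmax, hj])).2
    have h2 := (hE xmin hxminb (fun j hj => by simp [hxmin, hj])).1
    rw [hmaxeq] at h1
    rw [hmineq] at h2
    exact hopt E (by linarith) (by linarith)
end

section
/- Fix a threshold t₊. A subset E ⊆ Fin n satisfies s(x') ≥ t₊ for every completion x' of E if and only if sMin(E) ≥ t₊. (Characterization of abductive explanations of a positive classification, disregarding minimality.) -/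
open Finset

theorem positive_AXp_characterization
    (n : ℕ) (w : Fin n → ℝ) (b : ℝ) (l u : Fin n → ℝ)
    (hlu : ∀ j, l j ≤ u j)
    (x : Fin n → ℝ) (hx : ∀ j, l j ≤ x j ∧ x j ≤ u j)
    (tPlus : ℝ) (E : Finset (Fin n)) :
    (∀ x' : Fin n → ℝ, (∀ j, l j ≤ x' j ∧ x' j ≤ u j) → (∀ j ∈ E, x' j = x j) →
        tPlus ≤ (∑ j, w j * x' j) + b) ↔
    tPlus ≤ (∑ j ∈ E, w j * x j) + b + (∑ j ∈ Eᶜ, min (w j * l j) (w j * u j)) := by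
  have key : ∀ x' : Fin n → ℝ,
      (∑ j, w j * x' j) = (∑ j ∈ E, w j * x' j) + ∑ j ∈ Eᶜ, w j * x' j := by
    intro x'
    rw [← Finset.sum_add_sum_compl E]
  constructor
  · intro h
    set x' : Fin n → ℝ := fun j => if j ∈ E then x j else (if 0 ≤ w j then l j else u j)
      with hx'
    have hb : ∀ j, l j ≤ x' j ∧ x' j ≤ u j := by
      intro j
      simp only [hx']
      split_ifs with h1 h2
      · exact hx j
      · exact ⟨le_refl _, hlu j⟩
      · exact ⟨hlu j, le_refl _⟩
    have hE : ∀ j ∈ E, x' j = x j := by intro j hj; simp [hx', hj]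
    have := h x' hb hE
    calc tPlus ≤ (∑ j, w j * x' j) + b := this
      _ = (∑ j ∈ E, w j * x j) + b + (∑ j ∈ Eᶜ, min (w j * l j) (w j * u j)) := by
        rw [key]
        have h1 : ∑ j ∈ E, w j * x' j = ∑ j ∈ E, w j * x j :=
          Finset.sum_congr rfl fun j hj => by rw [hE j hj]
        have h2 : ∑ j ∈ Eᶜ, w j * x' j = ∑ j ∈ Eᶜ, min (w j * l j) (w j * u j) := by
          refine Finset.sum_congr rfl fun j hj => ?_
          have hj' : j ∉ E := by simpa using hj
          simp only [hx', if_neg hj']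
          rcases le_or_gt 0 (w j) with hw | hw
          · rw [if_pos hw, min_eq_left (mul_le_mul_of_nonneg_left (hlu j) hw)]
          · rw [if_neg (not_le.mpr hw),
              min_eq_right (mul_le_mul_of_nonpos_left (hlu j) hw.le)]
        rw [h1, h2]; ring
  · intro h x' hb hE
    refine le_trans h ?_
    rw [key]
    have h1 : ∑ j ∈ E, w j * x j = ∑ j ∈ E, w j * x' j :=
      Finset.sum_congr rfl fun j hj => by rw [hE j hj]
    have h2 : ∑ j ∈ Eᶜ, min (w j * l j) (w j * u j) ≤ ∑ j ∈ Eᶜ, w j * x' j := by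
      refine Finset.sum_le_sum fun j _ => ?_
      rcases le_or_gt 0 (w j) with hw | hw
      · exact le_trans (min_le_left _ _) (mul_le_mul_of_nonneg_left (hb j).1 hw)
      · exact le_trans (min_le_right _ _) (mul_le_mul_of_nonpos_left (hb j).2 hw.le)
    rw [h1]
    linarith
end

section
/- (Proposition 1.) Fix a threshold t₊ and assume s(x) ≥ t₊. Define α_j^min := min (w j * l j) (w j * u j) and δ_j⁺ := w j * x j − α_j^min, and assume the features are indexed so that δ⁺ is nonincreasing (for i ≤ j, δ_i⁺ ≥ δ_j⁺). Let k ≤ n be the least index such that b + (∑ j, α_j^min) + ∑_{i < k} δ_i⁺ ≥ t₊ (such k exists since taking all features gives sMin(univ) = s(x) ≥ t₊). Then the prefix E_g := {i : i < k} satisfies s(x') ≥ t₊ for every completion x' of E_g, and every subset E ⊆ Fin n such that all completions x' of E satisfy s(x') ≥ t₊ has |E| ≥ k. That is, E_g is a minimum-size abductive explanation for the positive prediction. -/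
open Finset

lemma min_mul_le (w l u y : ℝ) (h1 : l ≤ y) (h2 : y ≤ u) :
    min (w * l) (w * u) ≤ w * y := by
  rcases le_total 0 w with hw | hw
  · exact le_trans (min_le_left _ _) (by nlinarith)
  · exact le_trans (min_le_right _ _) (by nlinarith)

lemma sum_le_prefix_sum (n : ℕ) (δ : Fin n → ℝ) (hpos : ∀ i, 0 ≤ δ i)
    (hanti : ∀ i j : Fin n, i ≤ j → δ j ≤ δ i) (E : Finset (Fin n)) :
    ∑ i ∈ E, δ i ≤ ∑ i ∈ filter (fun i : Fin n => (i : ℕ) < E.card) univ, δ i := by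
  set m := E.card with hm
  set P := filter (fun i : Fin n => (i : ℕ) < m) univ with hP
  have hmn : m ≤ n := by simpa using Finset.card_le_univ E
  have hPcard : P.card = m := by
    have h2 : P.card = (Finset.range m).card := by
      refine Finset.card_bij' (fun a _ => (a : ℕ))
          (fun a ha => (⟨a, lt_of_lt_of_le (Finset.mem_range.mp ha) hmn⟩ : Fin n)) ?_ ?_ ?_ ?_
      · intro a ha
        simp only [hP, mem_filter, mem_univ, true_and] at ha
        simpa using ha
      · intro a ha
        simp only [hP, mem_filter, mem_univ, true_and]
        simpa using Finset.mem_range.mp ha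
      · intro a ha
        rfl
      · intro a ha
        rfl
    simpa using h2
  have hcardE : (E \ P).card + (E ∩ P).card = E.card := Finset.card_sdiff_add_card_inter E P
  have hcardP : (P \ E).card + (P ∩ E).card = P.card := Finset.card_sdiff_add_card_inter P E
  have hinter : (E ∩ P).card = (P ∩ E).card := by rw [Finset.inter_comm]
  have hc : (E \ P).card = (P \ E).card := by omega
  have hsplitE : ∑ i ∈ E ∩ P, δ i + ∑ i ∈ E \ P, δ i = ∑ i ∈ E, δ i :=
    Finset.sum_inter_add_sum_sdiff E P δ
  have hsplitP : ∑ i ∈ P ∩ E, δ i + ∑ i ∈ P \ E, δ i = ∑ i ∈ P, δ i :=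
    Finset.sum_inter_add_sum_sdiff P E δ
  have hinter' : ∑ i ∈ E ∩ P, δ i = ∑ i ∈ P ∩ E, δ i := by rw [Finset.inter_comm]
  have hkey : ∑ i ∈ E \ P, δ i ≤ ∑ i ∈ P \ E, δ i := by
    rcases Finset.eq_empty_or_nonempty (P \ E) with hne | hne
    · have h0 : (E \ P).card = 0 := by rw [hc, hne]; simp
      have : (E \ P) = ∅ := Finset.card_eq_zero.mp h0
      simp [this, hne]
    · obtain ⟨p0, hp0mem, hp0min⟩ := Finset.exists_min_image (P \ E) δ hne
      have h1 : ∑ i ∈ E \ P, δ i ≤ (E \ P).card • δ p0 := by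
        apply Finset.sum_le_card_nsmul
        intro e he
        have heE : ¬ ((e : ℕ) < m) := by
          have := (Finset.mem_sdiff.mp he).2
          simp only [hP, mem_filter, mem_univ, true_and] at this
          exact this
        have hp0P : (p0 : ℕ) < m := by
          have := (Finset.mem_sdiff.mp hp0mem).1
          simp only [hP, mem_filter, mem_univ, true_and] at this
          exact this
        exact hanti p0 e (by omega)
      have h2 : (P \ E).card • δ p0 ≤ ∑ i ∈ P \ E, δ i :=
        Finset.card_nsmul_le_sum _ _ _ (fun i hi => hp0min i hi)
      rw [hc] at h1
      exact le_trans h1 h2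
  linarith

theorem greedy_positive_optimal
    (n : ℕ) (w : Fin n → ℝ) (b : ℝ) (l u : Fin n → ℝ)
    (hlu : ∀ j, l j ≤ u j)
    (x : Fin n → ℝ) (hx : ∀ j, l j ≤ x j ∧ x j ≤ u j)
    (tPlus : ℝ) (hsx : tPlus ≤ (∑ j, w j * x j) + b)
    (hmono : ∀ i j : Fin n, i ≤ j →
      w j * x j - min (w j * l j) (w j * u j) ≤ w i * x i - min (w i * l i) (w i * u i))
    (k : ℕ) (hk : k ≤ n)
    (hge : tPlus ≤ b + (∑ j, min (w j * l j) (w j * u j)) +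
      ∑ i ∈ filter (fun i : Fin n => (i : ℕ) < k) univ,
        (w i * x i - min (w i * l i) (w i * u i)))
    (hleast : ∀ m : ℕ, m < k →
      ¬ (tPlus ≤ b + (∑ j, min (w j * l j) (w j * u j)) +
        ∑ i ∈ filter (fun i : Fin n => (i : ℕ) < m) univ,
          (w i * x i - min (w i * l i) (w i * u i)))) :
    (∀ x' : Fin n → ℝ, (∀ j, l j ≤ x' j ∧ x' j ≤ u j) →
        (∀ j ∈ filter (fun i : Fin n => (i : ℕ) < k) univ, x' j = x j) →
        tPlus ≤ (∑ j, w j * x' j) + b) ∧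
    (∀ E : Finset (Fin n),
      (∀ x' : Fin n → ℝ, (∀ j, l j ≤ x' j ∧ x' j ≤ u j) → (∀ j ∈ E, x' j = x j) →
        tPlus ≤ (∑ j, w j * x' j) + b) →
      k ≤ E.card) := by
  set δ : Fin n → ℝ := fun i => w i * x i - min (w i * l i) (w i * u i) with hδ
  have hpos : ∀ i, 0 ≤ δ i := fun i => by
    have := min_mul_le (w i) (l i) (u i) (x i) (hx i).1 (hx i).2
    simp only [hδ]
    linarith
  constructor
  · intro x' hx' heq
    set P := filter (fun i : Fin n => (i : ℕ) < k) univ with hP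
    have hsplit : ∑ j ∈ P, w j * x' j + ∑ j ∈ filter (fun i : Fin n => ¬ ((i : ℕ) < k)) univ,
        w j * x' j = ∑ j, w j * x' j := Finset.sum_filter_add_sum_filter_not univ _ _
    have hsplitm : ∑ j ∈ P, min (w j * l j) (w j * u j)
        + ∑ j ∈ filter (fun i : Fin n => ¬ ((i : ℕ) < k)) univ, min (w j * l j) (w j * u j)
        = ∑ j, min (w j * l j) (w j * u j) := Finset.sum_filter_add_sum_filter_not univ _ _
    have hA : ∑ j ∈ P, w j * x' j = ∑ j ∈ P, w j * x j :=
      Finset.sum_congr rfl (fun j hj => by rw [heq j hj])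
    have hB : ∑ j ∈ filter (fun i : Fin n => ¬ ((i : ℕ) < k)) univ, min (w j * l j) (w j * u j)
        ≤ ∑ j ∈ filter (fun i : Fin n => ¬ ((i : ℕ) < k)) univ, w j * x' j :=
      Finset.sum_le_sum (fun j _ => min_mul_le (w j) (l j) (u j) (x' j) (hx' j).1 (hx' j).2)
    have hδsum : ∑ i ∈ P, δ i = ∑ j ∈ P, w j * x j - ∑ j ∈ P, min (w j * l j) (w j * u j) := by
      rw [Finset.sum_sub_distrib]
    have hge' : tPlus ≤ b + (∑ j, min (w j * l j) (w j * u j)) + ∑ i ∈ P, δ i := hge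
    linarith
  · intro E hE
    by_contra hcon
    push_neg at hcon
    apply hleast E.card hcon
    set x' : Fin n → ℝ := fun j =>
      if j ∈ E then x j else (if w j * l j ≤ w j * u j then l j else u j) with hx'def
    have hbounds : ∀ j, l j ≤ x' j ∧ x' j ≤ u j := by
      intro j
      simp only [hx'def]
      split
      · exact hx j
      · split
        · exact ⟨le_refl _, hlu j⟩
        · exact ⟨hlu j, le_refl _⟩
    have hfix : ∀ j ∈ E, x' j = x j := fun j hj => by simp [hx'def, hj]
    have h1 := hE x' hbounds hfix
    have hsplit : ∑ j ∈ E, w j * x' j + ∑ j ∈ Eᶜ, w j * x' j = ∑ j, w j * x' j :=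
      Finset.sum_add_sum_compl E _
    have hsplitm : ∑ j ∈ E, min (w j * l j) (w j * u j)
        + ∑ j ∈ Eᶜ, min (w j * l j) (w j * u j) = ∑ j, min (w j * l j) (w j * u j) :=
      Finset.sum_add_sum_compl E _
    have hEeq : ∑ j ∈ E, w j * x' j = ∑ j ∈ E, w j * x j :=
      Finset.sum_congr rfl (fun j hj => by rw [hfix j hj])
    have hCeq : ∑ j ∈ Eᶜ, w j * x' j = ∑ j ∈ Eᶜ, min (w j * l j) (w j * u j) := by
      apply Finset.sum_congr rfl
      intro j hj
      have hjE : j ∉ E := Finset.mem_compl.mp hj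
      simp only [hx'def, if_neg hjE]
      split
      · rename_i h
        exact (min_eq_left h).symm
      · rename_i h
        exact (min_eq_right (le_of_not_ge h)).symm
    have hδE : ∑ i ∈ E, δ i = ∑ j ∈ E, w j * x j - ∑ j ∈ E, min (w j * l j) (w j * u j) := by
      rw [Finset.sum_sub_distrib]
    have hpre := sum_le_prefix_sum n δ hpos
      (fun i j hij => hmono i j hij) E
    simp only [hδ] at hpre hδE ⊢
    linarith
end

section
/- Fix a threshold t₋. For every subset E ⊆ Fin n: (i) s(x') ≤ t₋ holds for every completion x' of E if and only if sMax(E) ≤ t₋; and (ii) sMax(E) ≤ t₋ holds if and only if ∑ j ∈ E, δ_j⁻ ≥ (b + ∑ j, α_j^max) − t₋, where α_j^max := max (w j * l j) (w j * u j) and δ_j⁻ := α_j^max − w j * x j. (Characterization of abductive explanations of a negative classification.) -/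
open Finset

theorem negative_AXp_characterization
    (n : ℕ) (w : Fin n → ℝ) (b : ℝ) (l u : Fin n → ℝ)
    (hlu : ∀ j, l j ≤ u j)
    (x : Fin n → ℝ) (hx : ∀ j, l j ≤ x j ∧ x j ≤ u j)
    (tMinus : ℝ) (E : Finset (Fin n)) :
    ((∀ x' : Fin n → ℝ, (∀ j, l j ≤ x' j ∧ x' j ≤ u j) → (∀ j ∈ E, x' j = x j) →
        (∑ j, w j * x' j) + b ≤ tMinus) ↔
      (∑ j ∈ E, w j * x j) + b + (∑ j ∈ Eᶜ, max (w j * l j) (w j * u j)) ≤ tMinus) ∧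
    ((∑ j ∈ E, w j * x j) + b + (∑ j ∈ Eᶜ, max (w j * l j) (w j * u j)) ≤ tMinus ↔
      (b + ∑ j, max (w j * l j) (w j * u j)) - tMinus ≤
        ∑ j ∈ E, (max (w j * l j) (w j * u j) - w j * x j)) := by
  constructor
  · constructor
    · intro h
      set c : Fin n → ℝ := fun j => if j ∈ E then x j else
        (if w j * u j ≤ w j * l j then l j else u j) with hc
      have hcb : ∀ j, l j ≤ c j ∧ c j ≤ u j := by
        intro j
        simp only [hc]
        split_ifs with h1 h2
        · exact hx j
        · exact ⟨le_refl _, hlu j⟩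
        · exact ⟨hlu j, le_refl _⟩
      have hce : ∀ j ∈ E, c j = x j := by intro j hj; simp [hc, hj]
      have key := h c hcb hce
      have hsplit : (∑ j, w j * c j) = (∑ j ∈ E, w j * c j) + ∑ j ∈ Eᶜ, w j * c j := by
        rw [← Finset.sum_add_sum_compl E]
      have h1 : (∑ j ∈ E, w j * c j) = ∑ j ∈ E, w j * x j :=
        Finset.sum_congr rfl (fun j hj => by rw [hce j hj])
      have h2 : (∑ j ∈ Eᶜ, w j * c j) = ∑ j ∈ Eᶜ, max (w j * l j) (w j * u j) := by
        refine Finset.sum_congr rfl (fun j hj => ?_)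
        have hjE : j ∉ E := Finset.mem_compl.mp hj
        simp only [hc, if_neg hjE]
        split_ifs with h3
        · rw [max_eq_left h3]
        · rw [max_eq_right (le_of_not_ge h3)]
      rw [hsplit, h1, h2] at key
      linarith
    · intro h x' hx' hxe
      have hsplit : (∑ j, w j * x' j) = (∑ j ∈ E, w j * x' j) + ∑ j ∈ Eᶜ, w j * x' j := by
        rw [← Finset.sum_add_sum_compl E]
      have h1 : (∑ j ∈ E, w j * x' j) = ∑ j ∈ E, w j * x j :=
        Finset.sum_congr rfl (fun j hj => by rw [hxe j hj])
      have h2 : (∑ j ∈ Eᶜ, w j * x' j) ≤ ∑ j ∈ Eᶜ, max (w j * l j) (w j * u j) := by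
        refine Finset.sum_le_sum (fun j _ => ?_)
        rcases le_total 0 (w j) with hw | hw
        · exact le_max_of_le_right (mul_le_mul_of_nonneg_left (hx' j).2 hw)
        · exact le_max_of_le_left (mul_le_mul_of_nonpos_left (hx' j).1 hw)
      rw [hsplit, h1]
      linarith
  · have hall : (∑ j, max (w j * l j) (w j * u j)) =
        (∑ j ∈ E, max (w j * l j) (w j * u j)) + ∑ j ∈ Eᶜ, max (w j * l j) (w j * u j) := by
      rw [← Finset.sum_add_sum_compl E]
    rw [Finset.sum_sub_distrib, hall]
    constructor <;> intro h <;> linarith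
end

section
/- (Negative-case greedy optimality.) Fix a threshold t₋ and assume s(x) ≤ t₋. Define α_j^max := max (w j * l j) (w j * u j) and δ_j⁻ := α_j^max − w j * x j, and assume the features are indexed so that δ⁻ is nonincreasing (for i ≤ j, δ_i⁻ ≥ δ_j⁻). Let k ≤ n be the least index such that b + (∑ j, α_j^max) − ∑_{i < k} δ_i⁻ ≤ t₋ (such k exists since taking all features gives sMax(univ) = s(x) ≤ t₋). Then the prefix E_g := {i : i < k} satisfies s(x') ≤ t₋ for every completion x' of E_g, and every subset E ⊆ Fin n such that all completions x' of E satisfy s(x') ≤ t₋ has |E| ≥ k. That is, E_g is a minimum-size abductive explanation for the negative prediction. -/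
/-!
The largest score of a completion of `E` is `sMax E = b + ∑ α - ∑_{j ∈ E} δ⁻_j`, attained by
pushing every free feature to whichever bound maximises `w j * x' j`. So `E` explains the negative
prediction iff `∑_{j ∈ E} δ⁻_j` is large enough, and since `δ⁻` is nonincreasing, among sets of a
given size the prefix has the largest `δ⁻`-sum. Hence the least sufficient prefix length is also the
least size of any sufficient set.
-/

open Finset

theorem Fin.val_le_of_strictMono {m n : ℕ} {f : Fin m → Fin n} (hf : StrictMono f) (i : Fin m) :
    (i : ℕ) ≤ f i := by
  have hmaps : Set.MapsTo f (Iio i) (Iio (f i)) := fun j hj => by simpa using hf (by simpa using hj)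
  simpa using card_le_card_of_injOn f hmaps hf.injective.injOn

theorem Fin.map_castLEEmb_univ {m n : ℕ} (h : m ≤ n) :
    (univ : Finset (Fin m)).map (Fin.castLEEmb h) = univ.filter (fun i : Fin n => (i : ℕ) < m) := by
  ext i
  simp only [mem_map, mem_univ, true_and, mem_filter]
  exact ⟨by rintro ⟨j, rfl⟩; exact j.isLt, fun hi => ⟨⟨i, hi⟩, rfl⟩⟩

theorem Finset.sum_le_sum_filter_val_lt_card_of_antitone {M : Type*} [AddCommMonoid M]
    [PartialOrder M] [IsOrderedAddMonoid M] {n : ℕ} {f : Fin n → M} (hf : Antitone f)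
    (s : Finset (Fin n)) :
    ∑ i ∈ s, f i ≤ ∑ i ∈ univ.filter (fun i : Fin n => (i : ℕ) < #s), f i := by
  set e := s.orderEmbOfFin rfl
  have hcard : #s ≤ n := by simpa using card_le_univ s
  conv_lhs => rw [← s.map_orderEmbOfFin_univ rfl, sum_map]
  rw [← Fin.map_castLEEmb_univ hcard, sum_map]
  exact sum_le_sum fun j _ => hf (Fin.le_def.mpr (Fin.val_le_of_strictMono e.strictMono j))

theorem mul_le_max_mul_of_mem_Icc {w l y u : ℝ} (hl : l ≤ y) (hu : y ≤ u) :
    w * y ≤ max (w * l) (w * u) := by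
  rcases le_total 0 w with hw | hw
  · exact le_max_of_le_right (mul_le_mul_of_nonneg_left hu hw)
  · exact le_max_of_le_left (mul_le_mul_of_nonpos_left hl hw)

theorem exists_mem_Icc_mul_eq_max {w l u : ℝ} (hlu : l ≤ u) :
    ∃ y, (l ≤ y ∧ y ≤ u) ∧ w * y = max (w * l) (w * u) := by
  rcases max_choice (w * l) (w * u) with h | h
  · exact ⟨l, ⟨le_rfl, hlu⟩, h.symm⟩
  · exact ⟨u, ⟨hlu, le_rfl⟩, h.symm⟩

section Completion

variable {ι : Type*} [Fintype ι]

def IsCompletion (l u x : ι → ℝ) (E : Finset ι) (x' : ι → ℝ) : Prop :=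
  (∀ j, l j ≤ x' j ∧ x' j ≤ u j) ∧ ∀ j ∈ E, x' j = x j

variable [DecidableEq ι] (w : ι → ℝ) (b : ℝ) (l u x : ι → ℝ)

def sMax (E : Finset ι) : ℝ :=
  (∑ j ∈ E, w j * x j) + b + ∑ j ∈ Eᶜ, max (w j * l j) (w j * u j)

theorem sMax_eq_sub_sum (E : Finset ι) :
    sMax w b l u x E = b + (∑ j, max (w j * l j) (w j * u j)) -
      ∑ j ∈ E, (max (w j * l j) (w j * u j) - w j * x j) := by
  rw [sMax, ← sum_add_sum_compl E, sum_sub_distrib]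
  ring

variable {w b l u x}

theorem score_le_sMax {E : Finset ι} {x' : ι → ℝ} (hx' : IsCompletion l u x E x') :
    (∑ j, w j * x' j) + b ≤ sMax w b l u x E := by
  rw [sMax, ← sum_add_sum_compl E, sum_congr rfl fun j hj => by rw [hx'.2 j hj]]
  have hfree : ∑ j ∈ Eᶜ, w j * x' j ≤ ∑ j ∈ Eᶜ, max (w j * l j) (w j * u j) :=
    sum_le_sum fun j _ => mul_le_max_mul_of_mem_Icc (hx'.1 j).1 (hx'.1 j).2
  linarith

theorem exists_completion_score_eq_sMax (hlu : ∀ j, l j ≤ u j)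
    (hx : ∀ j, l j ≤ x j ∧ x j ≤ u j) (E : Finset ι) :
    ∃ x', IsCompletion l u x E x' ∧ (∑ j, w j * x' j) + b = sMax w b l u x E := by
  choose y hy hwy using fun j => exists_mem_Icc_mul_eq_max (w := w j) (hlu j)
  refine ⟨fun j => if j ∈ E then x j else y j, ⟨fun j => ?_, fun j hj => if_pos hj⟩, ?_⟩
  · dsimp only
    split_ifs
    exacts [hx j, hy j]
  · have hfixed : ∑ j ∈ E, w j * (if j ∈ E then x j else y j) = ∑ j ∈ E, w j * x j :=
      sum_congr rfl fun j hj => by rw [if_pos hj]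
    have hfree : ∑ j ∈ Eᶜ, w j * (if j ∈ E then x j else y j) =
        ∑ j ∈ Eᶜ, max (w j * l j) (w j * u j) :=
      sum_congr rfl fun j hj => by rw [if_neg (mem_compl.mp hj), hwy]
    rw [sMax, ← sum_add_sum_compl E, hfixed, hfree]
    ring

end Completion

theorem greedy_negative_optimal_general
    (n : ℕ) (w : Fin n → ℝ) (b : ℝ) (l u : Fin n → ℝ)
    (hlu : ∀ j, l j ≤ u j)
    (x : Fin n → ℝ) (hx : ∀ j, l j ≤ x j ∧ x j ≤ u j)
    (tMinus : ℝ)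
    (hmono : ∀ i j : Fin n, i ≤ j →
      max (w j * l j) (w j * u j) - w j * x j ≤ max (w i * l i) (w i * u i) - w i * x i)
    (k : ℕ)
    (hge : b + (∑ j, max (w j * l j) (w j * u j)) -
      (∑ i ∈ filter (fun i : Fin n => (i : ℕ) < k) univ,
        (max (w i * l i) (w i * u i) - w i * x i)) ≤ tMinus)
    (hleast : ∀ m : ℕ, m < k →
      ¬ (b + (∑ j, max (w j * l j) (w j * u j)) -
        (∑ i ∈ filter (fun i : Fin n => (i : ℕ) < m) univ,
          (max (w i * l i) (w i * u i) - w i * x i)) ≤ tMinus)) :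
    (∀ x' : Fin n → ℝ, (∀ j, l j ≤ x' j ∧ x' j ≤ u j) →
        (∀ j ∈ filter (fun i : Fin n => (i : ℕ) < k) univ, x' j = x j) →
        (∑ j, w j * x' j) + b ≤ tMinus) ∧
    (∀ E : Finset (Fin n),
      (∀ x' : Fin n → ℝ, (∀ j, l j ≤ x' j ∧ x' j ≤ u j) → (∀ j ∈ E, x' j = x j) →
        (∑ j, w j * x' j) + b ≤ tMinus) →
      k ≤ E.card) := by
  refine ⟨fun x' hbox hprefix => ?_, fun E hE => ?_⟩
  · calc (∑ j, w j * x' j) + b ≤ sMax w b l u x _ := score_le_sMax ⟨hbox, hprefix⟩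
      _ ≤ tMinus := by rwa [sMax_eq_sub_sum]
  · by_contra! hlt
    obtain ⟨x', hx', hscore⟩ := exists_completion_score_eq_sMax (b := b) hlu hx E
    refine hleast _ hlt ?_
    calc _ ≤ sMax w b l u x E := by
          rw [sMax_eq_sub_sum]
          exact sub_le_sub_left (sum_le_sum_filter_val_lt_card_of_antitone hmono E) _
      _ = (∑ j, w j * x' j) + b := hscore.symm
      _ ≤ tMinus := hE x' hx'.1 hx'.2

theorem greedy_negative_optimal
    (n : ℕ) (w : Fin n → ℝ) (b : ℝ) (l u : Fin n → ℝ)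
    (hlu : ∀ j, l j ≤ u j)
    (x : Fin n → ℝ) (hx : ∀ j, l j ≤ x j ∧ x j ≤ u j)
    (tMinus : ℝ) (hsx : (∑ j, w j * x j) + b ≤ tMinus)
    (hmono : ∀ i j : Fin n, i ≤ j →
      max (w j * l j) (w j * u j) - w j * x j ≤ max (w i * l i) (w i * u i) - w i * x i)
    (k : ℕ) (hk : k ≤ n)
    (hge : b + (∑ j, max (w j * l j) (w j * u j)) -
      (∑ i ∈ filter (fun i : Fin n => (i : ℕ) < k) univ,
        (max (w i * l i) (w i * u i) - w i * x i)) ≤ tMinus)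
    (hleast : ∀ m : ℕ, m < k →
      ¬ (b + (∑ j, max (w j * l j) (w j * u j)) -
        (∑ i ∈ filter (fun i : Fin n => (i : ℕ) < m) univ,
          (max (w i * l i) (w i * u i) - w i * x i)) ≤ tMinus)) :
    (∀ x' : Fin n → ℝ, (∀ j, l j ≤ x' j ∧ x' j ≤ u j) →
        (∀ j ∈ filter (fun i : Fin n => (i : ℕ) < k) univ, x' j = x j) →
        (∑ j, w j * x' j) + b ≤ tMinus) ∧
    (∀ E : Finset (Fin n),
      (∀ x' : Fin n → ℝ, (∀ j, l j ≤ x' j ∧ x' j ≤ u j) → (∀ j ∈ E, x' j = x j) →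
        (∑ j, w j * x' j) + b ≤ tMinus) →
      k ≤ E.card) :=
  greedy_negative_optimal_general n w b l u hlu x hx tMinus hmono k hge hleast
end
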